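/- If γ is a positive trace-class operator with Tr(Tγ) < ∞ and γ = Σ_n λ_n |φ_n⟩⟨φ_n| is its spectral decomposition with λ_n > 0, then φ_n ∈ Q(T) = D(T^{1/2}) for all n. -/

import Mathlib

open scoped ENNReal
open Filter

noncomputable section

variable {H : Type*} [NormedAddCommGroup H] [InnerProductSpace ℂ H] [CompleteSpace H]

/-- The rank-one operator `|φ⟩⟨φ| : ξ ↦ φ ⟨φ, ξ⟩`. -/
def rankOne (φ : H) : H →L[ℂ] H := (innerSL ℂ φ).smulRight φ

/-- The absolute value `|A| = √(A⋆A)` of a bounded operator. -/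
def absOp (A : H →L[ℂ] H) : H →L[ℂ] H := CFC.sqrt (star A * A)

variable {ι : Type*} [Countable ι]

/-- The trace computed along a Hilbert basis. -/
def traceAlong (e : HilbertBasis ι ℂ H) (A : H →L[ℂ] H) : ℝ :=
  ∑' n, (inner ℂ (e n) (A (e n)) : ℂ).re

/-- Summability of the diagonal along a Hilbert basis. -/
def diagSummable (e : HilbertBasis ι ℂ H) (A : H →L[ℂ] H) : Prop :=
  Summable fun n => (inner ℂ (e n) (A (e n)) : ℂ).re

/-- The trace norm `Tr |A|`. -/
def trNorm (e : HilbertBasis ι ℂ H) (A : H →L[ℂ] H) : ℝ := traceAlong e (absOp A)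

/-- `A` is trace class: the diagonal of `|A|` is summable. -/
def IsTraceClass (e : HilbertBasis ι ℂ H) (A : H →L[ℂ] H) : Prop :=
  diagSummable e (absOp A)

/-- A positive (possibly unbounded) self-adjoint operator on `H`, encoded as a densely
defined symmetric positive linear partial map together with its everywhere-defined bounded
resolvent family `res ε = (1 + ε T)⁻¹`, `ε > 0` (whose existence characterizes
self-adjointness for positive symmetric operators). -/
structure PosSAOp (H : Type*) [NormedAddCommGroup H] [InnerProductSpace ℂ H]
    [CompleteSpace H] where
  toPMap : H →ₗ.[ℂ] H
  dense_domain : Dense (toPMap.domain : Set H)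
  symmetric : ∀ x y : toPMap.domain, (inner ℂ (x : H) (toPMap y) : ℂ) = inner ℂ (toPMap x : H) (y : H)
  nonneg : ∀ x : toPMap.domain, 0 ≤ (inner ℂ (x : H) (toPMap x) : ℂ).re
  res : ℝ → H →L[ℂ] H
  res_mem : ∀ ε, 0 < ε → ∀ x : H, res ε x ∈ toPMap.domain
  res_spec : ∀ (ε : ℝ) (hε : 0 < ε) (x : H),
    res ε x + ε • toPMap ⟨res ε x, res_mem ε hε x⟩ = x

/-- The bounded monotone approximation `T_ε = T(1+εT)⁻¹ = ε⁻¹ (1 - (1+εT)⁻¹)`. -/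
def PosSAOp.approx (S : PosSAOp H) (ε : ℝ) : H →L[ℂ] H :=
  ε⁻¹ • (ContinuousLinearMap.id ℂ H - S.res ε)

/-- The extended trace `Tr(Tγ) := sup_{ε>0} Tr(T_ε γ) ∈ [0,∞]`. -/
def extTrace (e : HilbertBasis ι ℂ H) (S : PosSAOp H) (γ : H →L[ℂ] H) : ℝ≥0∞ :=
  ⨆ (ε : ℝ) (_ : 0 < ε), ENNReal.ofReal (traceAlong e (S.approx ε * γ))

/-- Membership in the form domain `Q(T)`: `φ ∈ Q(T)` iff `Tr(T|φ⟩⟨φ|) < ∞`. -/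
def memFormDomain (e : HilbertBasis ι ℂ H) (S : PosSAOp H) (φ : H) : Prop :=
  extTrace e S (rankOne φ) ≠ ⊤

/-- The cone `X⁺` of positive trace-class operators with finite kinetic energy. -/
def Xpos (e : HilbertBasis ι ℂ H) (S : PosSAOp H) : Set (H →L[ℂ] H) :=
  {γ | γ.IsPositive ∧ diagSummable e γ ∧ extTrace e S γ ≠ ⊤}

/-- The space `X = X⁺ - X⁺`. -/
def Xset (e : HilbertBasis ι ℂ H) (S : PosSAOp H) : Set (H →L[ℂ] H) :=
  {γ | ∃ p ∈ Xpos e S, ∃ m ∈ Xpos e S, γ = p - m}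

/-- The `X`-norm `‖γ‖_X = inf {Tr((1+T)γ⁺) + Tr((1+T)γ⁻) : γ = γ⁺ - γ⁻, γ^± ∈ S₁⁺}`,
with value `∞` when no finite decomposition exists. -/
def Xnorm (e : HilbertBasis ι ℂ H) (S : PosSAOp H) (γ : H →L[ℂ] H) : ℝ≥0∞ :=
  ⨅ (pm : (H →L[ℂ] H) × (H →L[ℂ] H)) (_ : pm.1.IsPositive ∧ pm.2.IsPositive ∧
      diagSummable e pm.1 ∧ diagSummable e pm.2 ∧ γ = pm.1 - pm.2),
    (ENNReal.ofReal (traceAlong e pm.1) + extTrace e S pm.1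
      + ENNReal.ofReal (traceAlong e pm.2) + extTrace e S pm.2)

/-!
For `ε > 0` the bounded operator `T_ε = T(1 + εT)⁻¹` is positive. Expanding the trace along the
Hilbert basis and exchanging the two sums gives `Tr(T_ε γ) = ∑ₘ λₘ ⟪φₘ, T_ε φₘ⟫`, a series of
nonnegative terms; the exchange is legitimate because `∑ₘ λₘ ‖φₘ‖² = Tr γ < ∞` (Tonelli on the
diagonal of `γ`). Hence `λₙ Tr(T_ε |φₙ⟩⟨φₙ|) ≤ Tr(T_ε γ)`, and taking the supremum over `ε`,
`Tr(T |φₙ⟩⟨φₙ|) ≤ λₙ⁻¹ Tr(Tγ) < ∞`.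
-/

open scoped InnerProductSpace

theorem HilbertBasis.hasSum_norm_inner_sq {𝕜 E κ : Type*} [RCLike 𝕜] [NormedAddCommGroup E]
    [InnerProductSpace 𝕜 E] (b : HilbertBasis κ 𝕜 E) (v : E) :
    HasSum (fun k => ‖⟪b k, v⟫_𝕜‖ ^ 2) (‖v‖ ^ 2) := by
  simpa [b.repr_apply_apply, b.repr.norm_map] using lp.hasSum_norm (p := 2) (by norm_num) (b.repr v)

namespace PosSAOp

theorem approx_apply (S : PosSAOp H) {ε : ℝ} (hε : 0 < ε) (x : H) :
    S.approx ε x = S.toPMap ⟨S.res ε x, S.res_mem ε hε x⟩ := by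
  have hsub : x - S.res ε x = ε • S.toPMap ⟨S.res ε x, S.res_mem ε hε x⟩ :=
    sub_eq_iff_eq_add'.2 (S.res_spec ε hε x).symm
  rw [approx, smul_apply, sub_apply, ContinuousLinearMap.id_apply, hsub, smul_smul,
    inv_mul_cancel₀ hε.ne', one_smul]

theorem re_inner_approx_self_nonneg (S : PosSAOp H) {ε : ℝ} (hε : 0 < ε) (x : H) :
    0 ≤ (⟪x, S.approx ε x⟫_ℂ).re := by
  have hx := S.res_spec ε hε x
  rw [S.approx_apply hε]
  -- with `y = (1 + εT)⁻¹ x` we have `x = y + ε T y`, so `⟪x, T_ε x⟫ = ⟪y, T y⟫ + ε ‖T y‖²`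
  set y : S.toPMap.domain := ⟨S.res ε x, S.res_mem ε hε x⟩
  change (y : H) + ε • S.toPMap y = x at hx
  rw [← hx, inner_add_left, Complex.add_re, ← Complex.coe_smul, inner_smul_left,
    Complex.conj_ofReal, Complex.re_ofReal_mul]
  exact add_nonneg (S.nonneg y) (mul_nonneg hε.le (inner_self_nonneg (𝕜 := ℂ)))

end PosSAOp

section

variable {E κ : Type*} [NormedAddCommGroup E] [InnerProductSpace ℂ E]

theorem traceAlong_mul_rankOne (e : HilbertBasis κ ℂ E) (A : E →L[ℂ] E) (ψ : E) :
    traceAlong e (A * rankOne ψ) = (⟪ψ, A ψ⟫_ℂ).re := by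
  rw [traceAlong, ← (Complex.hasSum_re (e.hasSum_inner_mul_inner ψ (A ψ))).tsum_eq]
  refine tsum_congr fun k => ?_
  simp [rankOne]

variable {w : ℕ → ℝ} {φ : ℕ → E} {γ : E →L[ℂ] E}

theorem hasSum_re_inner_apply_self
    (hγ : ∀ x, HasSum (fun m => w m • (⟪φ m, x⟫_ℂ • φ m)) (γ x)) (x : E) :
    HasSum (fun m => w m * ‖⟪φ m, x⟫_ℂ‖ ^ 2) (⟪x, γ x⟫_ℂ).re := by
  have hterm (m : ℕ) : (⟪x, w m • (⟪φ m, x⟫_ℂ • φ m)⟫_ℂ).re = w m * ‖⟪φ m, x⟫_ℂ‖ ^ 2 := by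
    rw [RCLike.real_smul_eq_coe_smul (K := ℂ), inner_smul_right, inner_smul_right,
      ← inner_conj_symm x (φ m), RCLike.mul_conj]
    norm_cast
  simpa only [innerSL_apply_apply, hterm] using Complex.hasSum_re ((innerSL ℂ x).hasSum (hγ x))

theorem summable_weight_mul_norm_sq (e : HilbertBasis κ ℂ E) (hw : ∀ m, 0 ≤ w m)
    (hγ : ∀ x, HasSum (fun m => w m • (⟪φ m, x⟫_ℂ • φ m)) (γ x)) (hs : diagSummable e γ) :
    Summable fun m => w m * ‖φ m‖ ^ 2 := by
  set F : κ × ℕ → ℝ := fun p => w p.2 * ‖⟪φ p.2, e p.1⟫_ℂ‖ ^ 2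
  have hF : 0 ≤ F := fun p => mul_nonneg (hw p.2) (sq_nonneg _)
  have hrow (k : κ) : HasSum (fun m => F (k, m)) (⟪e k, γ (e k)⟫_ℂ).re :=
    hasSum_re_inner_apply_self hγ (e k)
  have hcol (m : ℕ) : HasSum (fun k => F (k, m)) (w m * ‖φ m‖ ^ 2) := by
    simpa only [F, norm_inner_symm] using (e.hasSum_norm_inner_sq (φ m)).mul_left (w m)
  have hFsum : Summable F := (summable_prod_of_nonneg hF).2
    ⟨fun k => (hrow k).summable, by simp only [(hrow _).tsum_eq]; exact hs⟩
  have hswap := (summable_prod_of_nonneg fun p => hF p.swap).1 hFsum.prod_symm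
  simpa only [Prod.swap_prod_mk, (hcol _).tsum_eq] using hswap.2

theorem summable_weight_mul_norm_inner_sq (e : HilbertBasis κ ℂ E) {v : ℕ → E}
    (hw : ∀ m, 0 ≤ w m) (hv : Summable fun m => w m * ‖v m‖ ^ 2) :
    Summable fun p : κ × ℕ => w p.2 * ‖⟪e p.1, v p.2⟫_ℂ‖ ^ 2 := by
  have hF : 0 ≤ fun p : ℕ × κ => w p.1 * ‖⟪e p.2, v p.1⟫_ℂ‖ ^ 2 :=
    fun p => mul_nonneg (hw p.1) (sq_nonneg _)
  have hcol (m : ℕ) : HasSum (fun k => w m * ‖⟪e k, v m⟫_ℂ‖ ^ 2) (w m * ‖v m‖ ^ 2) :=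
    (e.hasSum_norm_inner_sq (v m)).mul_left (w m)
  refine ((summable_prod_of_nonneg hF).2 ⟨fun m => (hcol m).summable, ?_⟩).prod_symm
  simpa only [(hcol _).tsum_eq] using hv

theorem summable_weight_mul_inner_mul_inner (e : HilbertBasis κ ℂ E) (hw : ∀ m, 0 ≤ w m)
    (hφ : Summable fun m => w m * ‖φ m‖ ^ 2) (A : E →L[ℂ] E) :
    Summable fun p : κ × ℕ => (w p.2 : ℂ) * (⟪φ p.2, e p.1⟫_ℂ * ⟪e p.1, A (φ p.2)⟫_ℂ) := by
  have hAφ : Summable fun m => w m * ‖A (φ m)‖ ^ 2 := by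
    refine (hφ.mul_left (‖A‖ ^ 2)).of_nonneg_of_le (fun m => mul_nonneg (hw m) (sq_nonneg _))
      fun m => ?_
    calc w m * ‖A (φ m)‖ ^ 2 ≤ w m * (‖A‖ * ‖φ m‖) ^ 2 := by
          gcongr
          · exact hw m
          · exact A.le_opNorm _
      _ = ‖A‖ ^ 2 * (w m * ‖φ m‖ ^ 2) := by ring
  refine Summable.of_norm_bounded (((summable_weight_mul_norm_inner_sq e hw hφ).add
    (summable_weight_mul_norm_inner_sq e hw hAφ)).div_const 2) fun p => ?_
  -- `|a b| ≤ (|a|² + |b|²) / 2`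
  rw [norm_mul, norm_mul, Complex.norm_real, Real.norm_of_nonneg (hw _), norm_inner_symm]
  nlinarith [mul_nonneg (hw p.2) (sq_nonneg (‖⟪e p.1, φ p.2⟫_ℂ‖ - ‖⟪e p.1, A (φ p.2)⟫_ℂ‖))]

theorem hasSum_traceAlong_mul (e : HilbertBasis κ ℂ E) (hw : ∀ m, 0 ≤ w m)
    (hγ : ∀ x, HasSum (fun m => w m • (⟪φ m, x⟫_ℂ • φ m)) (γ x))
    (hφ : Summable fun m => w m * ‖φ m‖ ^ 2) (A : E →L[ℂ] E) :
    HasSum (fun m => w m * (⟪φ m, A (φ m)⟫_ℂ).re) (traceAlong e (A * γ)) := by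
  obtain ⟨s, hg⟩ := summable_weight_mul_inner_mul_inner e hw hφ A
  have hrow (k : κ) : HasSum (fun m => (w m : ℂ) * (⟪φ m, e k⟫_ℂ * ⟪e k, A (φ m)⟫_ℂ))
      ⟪e k, (A * γ) (e k)⟫_ℂ := by
    have hterm (m : ℕ) : ⟪e k, A (w m • (⟪φ m, e k⟫_ℂ • φ m))⟫_ℂ
        = w m * (⟪φ m, e k⟫_ℂ * ⟪e k, A (φ m)⟫_ℂ) := by
      rw [← Complex.coe_smul, map_smul, map_smul, inner_smul_right, inner_smul_right]
    simpa only [ContinuousLinearMap.comp_apply, innerSL_apply_apply, hterm, mul_apply_eq_comp]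
      using ((innerSL ℂ (e k)).comp A).hasSum (hγ (e k))
  have hcol (m : ℕ) : HasSum (fun k => (w m : ℂ) * (⟪φ m, e k⟫_ℂ * ⟪e k, A (φ m)⟫_ℂ))
      (w m * ⟪φ m, A (φ m)⟫_ℂ) :=
    (e.hasSum_inner_mul_inner (φ m) (A (φ m))).mul_left (w m : ℂ)
  have htr := Complex.hasSum_re (hg.prod_fiberwise hrow)
  rw [traceAlong, htr.tsum_eq]
  simpa only [Complex.re_ofReal_mul] using
    Complex.hasSum_re (((Equiv.prodComm ℕ κ).hasSum_iff.2 hg).prod_fiberwise hcol)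

end

theorem extTrace_le_of_mul_traceAlong_le {κ : Type*} (e : HilbertBasis κ ℂ H) (S : PosSAOp H)
    {β γ : H →L[ℂ] H} {c : ℝ} (hc : 0 < c)
    (h : ∀ ε, 0 < ε → c * traceAlong e (S.approx ε * β) ≤ traceAlong e (S.approx ε * γ)) :
    extTrace e S β ≤ ENNReal.ofReal c⁻¹ * extTrace e S γ := by
  refine iSup₂_le fun ε hε => ?_
  calc ENNReal.ofReal (traceAlong e (S.approx ε * β))
      ≤ ENNReal.ofReal (c⁻¹ * traceAlong e (S.approx ε * γ)) :=
        ENNReal.ofReal_le_ofReal ((le_inv_mul_iff₀ hc).2 (h ε hε))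
    _ = ENNReal.ofReal c⁻¹ * ENNReal.ofReal (traceAlong e (S.approx ε * γ)) :=
        ENNReal.ofReal_mul (inv_nonneg.2 hc.le)
    _ ≤ ENNReal.ofReal c⁻¹ * extTrace e S γ := by
        gcongr
        exact le_iSup₂ (f := fun ε (_ : 0 < ε) => ENNReal.ofReal (traceAlong e (S.approx ε * γ)))
          ε hε

theorem eigvec_memFormDomain_general (e : HilbertBasis ι ℂ H) (S : PosSAOp H) (γ : H →L[ℂ] H)
    (hs : diagSummable e γ) (hT : extTrace e S γ ≠ ⊤)
    (lam : ℕ → ℝ) (φ : ℕ → H) (hlam : ∀ n, 0 < lam n)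
    (hdecomp : ∀ x : H, HasSum (fun n => lam n • ((inner ℂ (φ n) x : ℂ) • φ n)) (γ x)) :
    ∀ n, memFormDomain e S (φ n) := by
  intro n
  have hw : ∀ m, 0 ≤ lam m := fun m => (hlam m).le
  have hφ := summable_weight_mul_norm_sq e hw hdecomp hs
  have hle : extTrace e S (rankOne (φ n)) ≤ ENNReal.ofReal (lam n)⁻¹ * extTrace e S γ := by
    refine extTrace_le_of_mul_traceAlong_le e S (hlam n) fun ε hε => ?_
    rw [traceAlong_mul_rankOne]
    exact le_hasSum (hasSum_traceAlong_mul e hw hdecomp hφ (S.approx ε)) n fun m _ =>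
      mul_nonneg (hw m) (S.re_inner_approx_self_nonneg hε (φ m))
  exact ne_top_of_le_ne_top (ENNReal.mul_ne_top ENNReal.ofReal_ne_top hT) hle

/-- Eigenvectors (with positive eigenvalue) of a positive trace-class operator of finite
kinetic energy lie in the form domain `Q(T)`. -/
theorem eigvec_memFormDomain (e : HilbertBasis ι ℂ H) (S : PosSAOp H) (γ : H →L[ℂ] H)
    (hγ : γ.IsPositive) (hs : diagSummable e γ) (hT : extTrace e S γ ≠ ⊤)
    (lam : ℕ → ℝ) (φ : ℕ → H) (horth : Orthonormal ℂ φ) (hlam : ∀ n, 0 < lam n)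
    (hdecomp : ∀ x : H, HasSum (fun n => lam n • ((inner ℂ (φ n) x : ℂ) • φ n)) (γ x)) :
    ∀ n, memFormDomain e S (φ n) :=
  eigvec_memFormDomain_general e S γ hs hT lam φ hlam hdecomp

end
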